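/- Memoryless strategies are sufficient for player 1 to win energy coBüchi games: if in an energy parity game with priority function p : Q → {1,2}, n states, and largest absolute weight W ≥ 1, player 1 wins from a state q (with some finite initial credit), then player 1 has a memoryless strategy that is winning from q with initial credit (n−1)·W. -/

import Mathlib

variable {Q : Type*}

/-- A play: an infinite path in the edge relation `E`. -/
def IsPlay (E : Q → Q → Prop) (ρ : ℕ → Q) : Prop :=
  ∀ i, E (ρ i) (ρ (i + 1))

/-- Energy level of the prefix of length `n` of `ρ`. -/
def EL (w : Q → Q → ℤ) (ρ : ℕ → Q) (n : ℕ) : ℤ :=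
  ∑ i ∈ Finset.range n, w (ρ i) (ρ (i + 1))

/-- Energy condition with initial credit `c₀`. -/
def EnergyCond (w : Q → Q → ℤ) (c₀ : ℕ) (ρ : ℕ → Q) : Prop :=
  ∀ n, 0 ≤ (c₀ : ℤ) + EL w ρ n

/-- The state `q` occurs infinitely often in `ρ`. -/
def InfOften (ρ : ℕ → Q) (q : Q) : Prop :=
  ∀ N, ∃ n, N ≤ n ∧ ρ n = q

/-- Parity condition: the minimum priority occurring infinitely often is even. -/
def ParityCond (p : Q → ℕ) (ρ : ℕ → Q) : Prop :=
  ∃ q, InfOften ρ q ∧ Even (p q) ∧ ∀ q', InfOften ρ q' → p q ≤ p q'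

/-- The history `ρ 0, …, ρ (i-1)` as a list. -/
def Hist (ρ : ℕ → Q) (i : ℕ) : List Q :=
  (List.range i).map ρ

/-- A (general, history-dependent) strategy for player 1: at every history ending in a
player-1 state `q` it proposes a successor of `q`. -/
def IsStrategy (Q1 : Set Q) (E : Q → Q → Prop) (σ : List Q → Q → Q) : Prop :=
  ∀ h q, q ∈ Q1 → E q (σ h q)

/-- An outcome of strategy `σ` from `q₀`. -/
def IsOutcome (Q1 : Set Q) (E : Q → Q → Prop) (σ : List Q → Q → Q) (q₀ : Q)
    (ρ : ℕ → Q) : Prop :=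
  ρ 0 = q₀ ∧ IsPlay E ρ ∧ ∀ i, ρ i ∈ Q1 → ρ (i + 1) = σ (Hist ρ i) (ρ i)

/-- Player 1 wins the energy parity game from `q₀` (with some finite initial credit). -/
def Player1Wins (Q1 : Set Q) (E : Q → Q → Prop) (p : Q → ℕ) (w : Q → Q → ℤ)
    (q₀ : Q) : Prop :=
  ∃ σ c₀, IsStrategy Q1 E σ ∧
    ∀ ρ, IsOutcome Q1 E σ q₀ ρ → ParityCond p ρ ∧ EnergyCond w c₀ ρ

/-- An outcome of the memoryless player-1 strategy `σ` from `q₀`. -/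
def MemlessOutcome (Q1 : Set Q) (E : Q → Q → Prop) (σ : Q → Q) (q₀ : Q)
    (ρ : ℕ → Q) : Prop :=
  ρ 0 = q₀ ∧ IsPlay E ρ ∧ ∀ i, ρ i ∈ Q1 → ρ (i + 1) = σ (ρ i)

/-- The minimal priority on the cycle `ρ i, …, ρ (i+k)` is even. -/
def MinPrioEven (p : Q → ℕ) (ρ : ℕ → Q) (i k : ℕ) : Prop :=
  ∃ j ∈ Finset.Icc i (i + k), Even (p (ρ j)) ∧
    ∀ l ∈ Finset.Icc i (i + k), p (ρ j) ≤ p (ρ l)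

/-- The memoryless strategy `σ` is good-for-energy in `q`: every cycle of every outcome
of `σ` from `q` has positive energy level, or zero energy level and even minimal
priority. -/
def GoodForEnergy (Q1 : Set Q) (E : Q → Q → Prop) (p : Q → ℕ) (w : Q → Q → ℤ)
    (σ : Q → Q) (q : Q) : Prop :=
  ∀ ρ, MemlessOutcome Q1 E σ q ρ → ∀ i k, 0 < k → ρ i = ρ (i + k) →
    0 < ∑ j ∈ Finset.Ico i (i + k), w (ρ j) (ρ (j + 1)) ∨
      (∑ j ∈ Finset.Ico i (i + k), w (ρ j) (ρ (j + 1)) = 0 ∧ MinPrioEven p ρ i k)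

/-!
Grow an increasing sequence of sets of states: `layer (k + 1)` adds to `layer k` the states from
which player 1 can force the next state into `layer k`, and the states from which, inside the
complement of `layer k`, player 1 can keep the energy nonnegative forever without visiting
priority 1 ("safe" states). Once the sequence stabilises, its complement is a player-1 trap
without safe states: there player 2 can answer every history by forcing either an energy deficit
or another visit to priority 1, so player 1 loses, and the winning state `q` lies in some layer.

The memoryless strategy moves down a layer whenever it can, and otherwise makes a step `s → t`
inside the safe region with `credit t ≤ credit s + w s t`, where `credit` is the least initial
credit that suffices to stay safe. Along its outcomes the layer index never increases, so it is
constant on a cycle; then every step of the cycle is such a safe step, and telescoping the credit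
shows that the cycle has nonnegative weight and avoids priority 1. Cutting out cycles bounds the
energy level below by `-(n - 1) W`, and the states visited infinitely often lie on cycles, so
they have priority 2.
-/

open Finset

theorem Hist_congr {γ δ : ℕ → Q} {m : ℕ} (h : ∀ i < m, γ i = δ i) : Hist γ m = Hist δ m :=
  List.map_congr_left fun i hi => h i (List.mem_range.mp hi)

theorem Hist_add (γ : ℕ → Q) (m k : ℕ) :
    Hist γ (m + k) = Hist γ m ++ Hist (fun j => γ (m + j)) k := by
  simp only [Hist, List.range_add, List.map_append, List.map_map]
  rfl

theorem EL_congr (w : Q → Q → ℤ) {γ δ : ℕ → Q} {m : ℕ} (h : ∀ i ≤ m, γ i = δ i) :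
    EL w γ m = EL w δ m :=
  sum_congr rfl fun i hi => by
    have hi : i < m := mem_range.mp hi
    rw [h i hi.le, h (i + 1) hi]

theorem EL_add (w : Q → Q → ℤ) (γ : ℕ → Q) (m k : ℕ) :
    EL w γ (m + k) = EL w γ m + EL w (fun j => γ (m + j)) k :=
  sum_range_add _ m k

theorem neg_mul_le_EL {E : Q → Q → Prop} {w : Q → Q → ℤ} {W : ℕ}
    (hW : ∀ s t, E s t → |w s t| ≤ W) {ρ : ℕ → Q} (hρ : IsPlay E ρ) (m : ℕ) :
    -((m * W : ℕ) : ℤ) ≤ EL w ρ m := by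
  have := card_nsmul_le_sum (range m) (fun i => w (ρ i) (ρ (i + 1))) (-(W : ℤ))
    fun i _ => (abs_le.mp (hW _ _ (hρ i))).1
  simpa [EL] using this

theorem exists_seq_of_forall_exists {α : Type*} {P : α → Prop} {R : α → α → Prop}
    (h : ∀ x, P x → ∃ y, P y ∧ R x y) {x₀ : α} (h₀ : P x₀) :
    ∃ f : ℕ → α, f 0 = x₀ ∧ ∀ k, P (f k) ∧ R (f k) (f (k + 1)) := by
  choose g hgP hgR using h
  let F : ℕ → {x // P x} := fun k => Nat.rec ⟨x₀, h₀⟩ (fun _ x => ⟨g x.1 x.2, hgP _ _⟩) k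
  exact ⟨fun k => (F k).1, rfl, fun k => ⟨(F k).2, hgR _ _⟩⟩

theorem exists_limit_of_forall_extend (P : (ℕ → Q) × ℕ → Prop)
    (hstep : ∀ x, P x → ∃ y, P y ∧ x.2 < y.2 ∧ ∀ i ≤ x.2, y.1 i = x.1 i)
    {x₀ : (ℕ → Q) × ℕ} (h₀ : P x₀) :
    ∃ ρ : ℕ → Q, ∀ N, ∃ x, P x ∧ N ≤ x.2 ∧ ∀ i ≤ x.2, ρ i = x.1 i := by
  obtain ⟨f, -, hf⟩ := exists_seq_of_forall_exists hstep h₀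
  have hlen : StrictMono fun k => (f k).2 := strictMono_nat_of_lt_succ fun k => (hf k).2.1
  have hagree : ∀ j k, j ≤ k → ∀ i ≤ (f j).2, (f k).1 i = (f j).1 i := by
    intro j k hjk
    induction k, hjk using Nat.le_induction with
    | base => exact fun _ _ => rfl
    | succ k hjk ih =>
      intro i hi
      rw [(hf k).2.2 i (hi.trans (hlen.monotone hjk)), ih i hi]
  refine ⟨fun n => (f n).1 n, fun N => ⟨f N, (hf N).1, hlen.id_le N, fun i hi => ?_⟩⟩
  rcases le_total i N with hiN | hNi
  · exact (hagree i N hiN i (hlen.id_le i)).symm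
  · exact hagree N i hNi i hi

section Prefixes

variable (Q1 : Set Q) (E : Q → Q → Prop)

def IsConsistentPrefix (σ : List Q → Q → Q) (s : Q) (γ : ℕ → Q) (m : ℕ) : Prop :=
  γ 0 = s ∧ ∀ i < m, E (γ i) (γ (i + 1)) ∧ (γ i ∈ Q1 → γ (i + 1) = σ (Hist γ i) (γ i))

variable {Q1 E} {σ : List Q → Q → Q} {s : Q} {γ δ : ℕ → Q} {m : ℕ}

theorem IsConsistentPrefix.mono (h : IsConsistentPrefix Q1 E σ s γ m) {m' : ℕ} (hm : m' ≤ m) :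
    IsConsistentPrefix Q1 E σ s γ m' :=
  ⟨h.1, fun i hi => h.2 i (by omega)⟩

theorem IsConsistentPrefix.congr (h : IsConsistentPrefix Q1 E σ s γ m)
    (hδ : ∀ i ≤ m, δ i = γ i) : IsConsistentPrefix Q1 E σ s δ m := by
  refine ⟨(hδ 0 (Nat.zero_le _)).trans h.1, fun i hi => ?_⟩
  rw [hδ i hi.le, hδ (i + 1) hi, Hist_congr fun j hj => hδ j (by omega)]
  exact h.2 i hi

theorem IsConsistentPrefix.update (h : IsConsistentPrefix Q1 E σ s γ m) {t : Q}
    (ht : E (γ m) t) (hσ : γ m ∈ Q1 → t = σ (Hist γ m) (γ m)) :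
    IsConsistentPrefix Q1 E σ s (Function.update γ (m + 1) t) (m + 1) := by
  have hlow : ∀ i ≤ m, Function.update γ (m + 1) t i = γ i := fun i hi =>
    Function.update_of_ne (by omega) _ _
  refine ⟨(hlow 0 (Nat.zero_le _)).trans h.1, fun i hi => ?_⟩
  rw [hlow i (by omega), Hist_congr fun j hj => hlow j (by omega)]
  rcases Nat.lt_succ_iff_lt_or_eq.mp hi with hi | rfl
  · rw [hlow (i + 1) hi]
    exact h.2 i hi
  · rw [Function.update_self]
    exact ⟨ht, hσ⟩

theorem isOutcome_of_forall_isConsistentPrefix {ρ : ℕ → Q}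
    (h : ∀ m, IsConsistentPrefix Q1 E σ s ρ m) : IsOutcome Q1 E σ s ρ :=
  ⟨(h 0).1, fun i => ((h (i + 1)).2 i i.lt_succ_self).1,
    fun i => ((h (i + 1)).2 i i.lt_succ_self).2⟩

def concatAt (m : ℕ) (γ γ' : ℕ → Q) : ℕ → Q := fun i => if i < m then γ i else γ' (i - m)

theorem concatAt_add (γ' : ℕ → Q) (a : ℕ) : concatAt m γ γ' (m + a) = γ' a := by
  simp [concatAt]

theorem concatAt_of_le {γ' : ℕ → Q} (h₀ : γ' 0 = γ m) {i : ℕ} (hi : i ≤ m) :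
    concatAt m γ γ' i = γ i := by
  rcases hi.lt_or_eq with hi | rfl
  · simp [concatAt, hi]
  · simp [concatAt, h₀]

theorem EL_concatAt (w : Q → Q → ℤ) {γ' : ℕ → Q} (h₀ : γ' 0 = γ m) (m' : ℕ) :
    EL w (concatAt m γ γ') (m + m') = EL w γ m + EL w γ' m' := by
  rw [EL_add, EL_congr w fun i hi => concatAt_of_le h₀ hi]
  simp only [concatAt_add]

theorem concatAt_mem {C : Set Q} {γ' : ℕ → Q} {m' : ℕ} (hγ : ∀ i ≤ m, γ i ∈ C)
    (hγ' : ∀ i ≤ m', γ' i ∈ C) (h₀ : γ' 0 = γ m) : ∀ i ≤ m + m', concatAt m γ γ' i ∈ C := by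
  intro i hi
  rcases Nat.lt_or_ge i m with him | him
  · rw [concatAt_of_le h₀ him.le]
    exact hγ i him.le
  · obtain ⟨a, rfl⟩ := Nat.exists_eq_add_of_le him
    rw [concatAt_add]
    exact hγ' a (by omega)

theorem IsConsistentPrefix.concat (hγ : IsConsistentPrefix Q1 E σ s γ m) {γ' : ℕ → Q} {m' : ℕ}
    (hγ' : IsConsistentPrefix Q1 E (fun l => σ (Hist γ m ++ l)) (γ m) γ' m') :
    IsConsistentPrefix Q1 E σ s (concatAt m γ γ') (m + m') := by
  have hlow : ∀ i ≤ m, concatAt m γ γ' i = γ i := fun i => concatAt_of_le hγ'.1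
  refine ⟨(hlow 0 (Nat.zero_le _)).trans hγ.1, fun i hi => ?_⟩
  rcases lt_or_ge i m with him | him
  · rw [hlow i him.le, hlow (i + 1) him, Hist_congr fun j hj => hlow j (by omega)]
    exact hγ.2 i him
  · obtain ⟨a, rfl⟩ := Nat.exists_eq_add_of_le him
    rw [Hist_add, Hist_congr fun j hj => hlow j hj.le, show m + a + 1 = m + (a + 1) by omega]
    simp only [concatAt_add]
    exact hγ'.2 a (by omega)

theorem isOutcome_of_limit {ρ : ℕ → Q}
    (h : ∀ N, ∃ x : (ℕ → Q) × ℕ, IsConsistentPrefix Q1 E σ s x.1 x.2 ∧ N ≤ x.2 ∧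
      ∀ i ≤ x.2, ρ i = x.1 i) :
    IsOutcome Q1 E σ s ρ :=
  isOutcome_of_forall_isConsistentPrefix fun N => by
    obtain ⟨x, hx, hN, hρ⟩ := h N
    exact (hx.congr hρ).mono hN

theorem IsConsistentPrefix.exists_isOutcome (hE : ∀ x, ∃ t, E x t) (hσ : IsStrategy Q1 E σ)
    {γ : ℕ → Q} {m : ℕ} (hγ : IsConsistentPrefix Q1 E σ s γ m) :
    ∃ ρ, IsOutcome Q1 E σ s ρ ∧ ∀ i ≤ m, ρ i = γ i := by
  classical
  let P : (ℕ → Q) × ℕ → Prop := fun x =>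
    IsConsistentPrefix Q1 E σ s x.1 x.2 ∧ m ≤ x.2 ∧ ∀ i ≤ m, x.1 i = γ i
  have hstep : ∀ x, P x → ∃ y, P y ∧ x.2 < y.2 ∧ ∀ i ≤ x.2, y.1 i = x.1 i := by
    rintro ⟨δ, n⟩ ⟨hδ, hmn, hδγ⟩
    let t := if δ n ∈ Q1 then σ (Hist δ n) (δ n) else (hE (δ n)).choose
    have hlow : ∀ i ≤ n, Function.update δ (n + 1) t i = δ i := fun i hi =>
      Function.update_of_ne (by omega) _ _
    have hδt : IsConsistentPrefix Q1 E σ s (Function.update δ (n + 1) t) (n + 1) := by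
      by_cases h1 : δ n ∈ Q1
      · exact hδ.update (by simpa [t, h1] using hσ _ _ h1) (by simp [t, h1])
      · exact hδ.update (by simpa [t, h1] using (hE (δ n)).choose_spec) (absurd · h1)
    exact ⟨(Function.update δ (n + 1) t, n + 1),
      ⟨hδt, by omega, fun i hi => (hlow i (by omega)).trans (hδγ i hi)⟩, n.lt_succ_self, hlow⟩
  obtain ⟨ρ, hρ⟩ :=
    exists_limit_of_forall_extend P hstep (x₀ := (γ, m)) ⟨hγ, le_rfl, fun _ _ => rfl⟩
  refine ⟨ρ, isOutcome_of_limit fun N => ?_, fun i hi => ?_⟩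
  · obtain ⟨x, hx, hN, hρx⟩ := hρ N
    exact ⟨x, hx.1, hN, hρx⟩
  · obtain ⟨x, hx, -, hρx⟩ := hρ m
    exact (hρx i (hi.trans hx.2.1)).trans (hx.2.2 i hi)

end Prefixes

theorem exists_infOften_of_frequently [Finite Q] {ρ : ℕ → Q} {P : Q → Prop}
    (h : ∀ N, ∃ n, N ≤ n ∧ P (ρ n)) : ∃ s, P s ∧ InfOften ρ s := by
  have h' : ∃ᶠ n in Filter.atTop, ∃ s, P s ∧ ρ n = s :=
    Filter.frequently_atTop.2 fun N => (h N).imp fun n hn => ⟨hn.1, _, hn.2, rfl⟩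
  obtain ⟨s, hs⟩ := Filter.frequently_exists.1 h'
  obtain ⟨hPs, hs⟩ := Filter.frequently_and_distrib_left.1 hs
  exact ⟨s, hPs, Filter.frequently_atTop.1 hs⟩

theorem InfOften.exists_cycle {ρ : ℕ → Q} {s : Q} (h : InfOften ρ s) :
    ∃ i k, 0 < k ∧ ρ i = s ∧ ρ (i + k) = s := by
  obtain ⟨i, -, hi⟩ := h 0
  obtain ⟨j, hj, hj'⟩ := h (i + 1)
  exact ⟨i, j - i, by omega, hi, by rwa [Nat.add_sub_cancel' (by omega)]⟩

theorem parityCond_iff_of_coBuchi [Finite Q] {p : Q → ℕ} (hp : ∀ s, p s = 1 ∨ p s = 2)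
    {ρ : ℕ → Q} : ParityCond p ρ ↔ ∀ s, InfOften ρ s → p s ≠ 1 := by
  constructor
  · rintro ⟨s₀, hs₀, heven, hmin⟩ s hs hps
    have hle := hps ▸ hmin s hs
    rcases hp s₀ with h | h
    · exact Nat.not_even_one (h ▸ heven)
    · omega
  · intro h
    have h2 : ∀ s, InfOften ρ s → p s = 2 := fun s hs => (hp s).resolve_left (h s hs)
    obtain ⟨s₀, -, hs₀⟩ := exists_infOften_of_frequently (P := fun _ => True) (ρ := ρ)
      fun N => ⟨N, le_rfl, trivial⟩
    exact ⟨s₀, hs₀, by simp [h2 s₀ hs₀], fun s hs => by rw [h2 s₀ hs₀, h2 s hs]⟩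

section Safety

variable (Q1 : Set Q) (E : Q → Q → Prop) (p : Q → ℕ) (w : Q → Q → ℤ)

def IsStrategyIn (C : Set Q) (σ : List Q → Q → Q) : Prop :=
  ∀ l x, x ∈ Q1 → x ∈ C → E x (σ l x) ∧ σ l x ∈ C

-- The start is exempt from the priority constraint, so that in a trap without safe states every
-- violation lies strictly after the current history.
def IsSafeFrom (C : Set Q) (σ : List Q → Q → Q) (s : Q) (c : ℕ) : Prop :=
  ∀ γ m, IsConsistentPrefix Q1 E σ s γ m → (∀ i ≤ m, γ i ∈ C) →
    0 ≤ (c : ℤ) + EL w γ m ∧ ∀ i, 0 < i → i ≤ m → p (γ i) ≠ 1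

def WinsSafely (C : Set Q) (s : Q) (c : ℕ) : Prop :=
  s ∈ C ∧ ∃ σ, IsStrategyIn Q1 E C σ ∧ IsSafeFrom Q1 E p w C σ s c

def safeSet (C : Set Q) : Set Q := {s | ∃ c, WinsSafely Q1 E p w C s c}

noncomputable def safeCredit (C : Set Q) (s : Q) : ℕ := sInf {c | WinsSafely Q1 E p w C s c}

def SafeStep (C : Set Q) (s t : Q) : Prop :=
  t ∈ safeSet Q1 E p w C ∧ p t ≠ 1 ∧
    (safeCredit Q1 E p w C t : ℤ) ≤ safeCredit Q1 E p w C s + w s t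

variable {Q1 E p w} {C : Set Q} {s t : Q}

theorem safeSet_subset : safeSet Q1 E p w C ⊆ C := fun _ ⟨_, h⟩ => h.1

theorem IsSafeFrom.succ {σ : List Q → Q → Q} {c : ℕ} (h : IsSafeFrom Q1 E p w C σ s c)
    (hs : s ∈ C) (ht : t ∈ C) (hst : E s t) (hσ : s ∈ Q1 → t = σ [] s) :
    p t ≠ 1 ∧ 0 ≤ (c : ℤ) + w s t ∧
      IsSafeFrom Q1 E p w C (fun l => σ (s :: l)) t (c + w s t).toNat := by
  let γ : ℕ → Q := fun i => if i = 0 then s else t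
  have hγ : IsConsistentPrefix Q1 E σ s γ 1 := ⟨rfl, fun i hi => by
    obtain rfl : i = 0 := by omega
    exact ⟨hst, hσ⟩⟩
  have hγC : ∀ i ≤ 1, γ i ∈ C := fun i _ => by by_cases hi : i = 0 <;> simp [γ, hi, hs, ht]
  obtain ⟨hc, hp⟩ := h γ 1 hγ hγC
  have hct : 0 ≤ (c : ℤ) + w s t := by simpa [EL, γ] using hc
  refine ⟨by simpa [γ] using hp 1 one_pos le_rfl, hct, fun γ' m' hγ' hγ'C => ?_⟩
  have hcat := hγ.concat (γ' := γ') (m' := m') hγ'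
  obtain ⟨hen, hpr⟩ := h _ _ hcat (concatAt_mem hγC hγ'C hγ'.1)
  rw [EL_concatAt w hγ'.1] at hen
  refine ⟨?_, fun i hi0 him => ?_⟩
  · rw [Int.toNat_of_nonneg hct]
    have : EL w γ 1 = w s t := by simp [EL, γ]
    linarith
  · simpa [concatAt_add] using hpr (1 + i) (by omega) (by omega)

theorem exists_strategy_safeStep (hs : s ∈ safeSet Q1 E p w C) :
    ∃ σ, IsStrategyIn Q1 E C σ ∧
      ∀ t, E s t → t ∈ C → (s ∈ Q1 → t = σ [] s) → SafeStep Q1 E p w C s t := by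
  obtain ⟨hsC, σ, hσ, hsafe⟩ : WinsSafely Q1 E p w C s (safeCredit Q1 E p w C s) :=
    Nat.sInf_mem hs
  refine ⟨σ, hσ, fun t hst htC hσt => ?_⟩
  obtain ⟨hpt, hct, hsafe'⟩ := hsafe.succ hsC htC hst hσt
  have hwin : WinsSafely Q1 E p w C t _ := ⟨htC, _, fun l => hσ (s :: l), hsafe'⟩
  refine ⟨⟨_, hwin⟩, hpt, ?_⟩
  calc (safeCredit Q1 E p w C t : ℤ) ≤ ((safeCredit Q1 E p w C s + w s t).toNat : ℕ) :=
        Int.ofNat_le.mpr (Nat.sInf_le hwin)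
    _ = safeCredit Q1 E p w C s + w s t := Int.toNat_of_nonneg hct

theorem exists_safeStep_of_mem (hs : s ∈ safeSet Q1 E p w C) (hs₁ : s ∈ Q1) :
    ∃ t, E s t ∧ SafeStep Q1 E p w C s t := by
  obtain ⟨σ, hσ, hstep⟩ := exists_strategy_safeStep hs
  obtain ⟨hst, htC⟩ := hσ [] s hs₁ (safeSet_subset hs)
  exact ⟨_, hst, hstep _ hst htC fun _ => rfl⟩

theorem safeStep_of_notMem (hs : s ∈ safeSet Q1 E p w C) (hs₁ : s ∉ Q1) (hst : E s t)
    (ht : t ∈ C) : SafeStep Q1 E p w C s t := by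
  obtain ⟨σ, -, hstep⟩ := exists_strategy_safeStep hs
  exact hstep t hst ht (absurd · hs₁)

end Safety

section Trap

variable {Q1 : Set Q} {E : Q → Q → Prop} {p : Q → ℕ} {w : Q → Q → ℤ} {C : Set Q}
  {σ : List Q → Q → Q} {q : Q}

theorem exists_extend_to_priority_one (hE : ∀ x, ∃ t, E x t) (hσ : IsStrategy Q1 E σ)
    {c₀ : ℕ} (hwin : ∀ ρ, IsOutcome Q1 E σ q ρ → EnergyCond w c₀ ρ)
    (htrap : ∀ s ∈ C, s ∈ Q1 → ∀ t, E s t → t ∈ C) (hsafe : safeSet Q1 E p w C = ∅)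
    {γ : ℕ → Q} {m : ℕ} (hγ : IsConsistentPrefix Q1 E σ q γ m) (hγC : ∀ i ≤ m, γ i ∈ C) :
    ∃ x : (ℕ → Q) × ℕ, (IsConsistentPrefix Q1 E σ q x.1 x.2 ∧ (∀ i ≤ x.2, x.1 i ∈ C) ∧
      p (x.1 x.2) = 1) ∧ m < x.2 ∧ ∀ i ≤ m, x.1 i = γ i := by
  set c := ((c₀ : ℤ) + EL w γ m).toNat
  have hres : IsStrategyIn Q1 E C fun l => σ (Hist γ m ++ l) := fun l x hx hxC =>
    ⟨hσ _ x hx, htrap x hxC hx _ (hσ _ x hx)⟩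
  have hunsafe : ¬ IsSafeFrom Q1 E p w C (fun l => σ (Hist γ m ++ l)) (γ m) c := fun h =>
    hsafe.subset ⟨c, hγC m le_rfl, _, hres, h⟩
  simp only [IsSafeFrom, not_forall, not_and_or, not_le, exists_prop] at hunsafe
  obtain ⟨δ, n, hδ, hδC, hbad⟩ := hunsafe
  have hζ := hγ.concat hδ
  have hζC := concatAt_mem hγC hδC hδ.1
  rcases hbad with hneg | ⟨i, hi0, hin, hpi⟩
  · exfalso
    obtain ⟨ρ, hρ, hρζ⟩ := hζ.exists_isOutcome hE hσ
    have := hwin ρ hρ (m + n)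
    rw [EL_congr w hρζ, EL_concatAt w hδ.1] at this
    have hc : (c₀ : ℤ) + EL w γ m ≤ c := Int.self_le_toNat _
    linarith
  · refine ⟨(concatAt m γ δ, m + i), ⟨hζ.mono (by omega), fun j hj => hζC j (by omega), ?_⟩,
      by omega, fun j hj => concatAt_of_le hδ.1 hj⟩
    simpa [concatAt_add] using hpi

theorem not_player1Wins_of_trap [Finite Q] (hE : ∀ x, ∃ t, E x t)
    (hp : ∀ s, p s = 1 ∨ p s = 2) (htrap : ∀ s ∈ C, s ∈ Q1 → ∀ t, E s t → t ∈ C)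
    (hsafe : safeSet Q1 E p w C = ∅) (hq : q ∈ C) : ¬ Player1Wins Q1 E p w q := by
  rintro ⟨σ, c₀, hσ, hwin⟩
  have hext := fun γ m => exists_extend_to_priority_one hE hσ (fun ρ hρ => (hwin ρ hρ).2)
    htrap hsafe (γ := γ) (m := m)
  obtain ⟨x₀, hx₀, -⟩ := hext (fun _ => q) 0 ⟨rfl, fun _ h => absurd h (Nat.not_lt_zero _)⟩
    fun _ _ => hq
  obtain ⟨ρ, hρ⟩ := exists_limit_of_forall_extend _
    (fun x hx => hext x.1 x.2 hx.1 hx.2.1) hx₀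
  have hout : IsOutcome Q1 E σ q ρ := isOutcome_of_limit fun N => by
    obtain ⟨x, hx, hN, hρx⟩ := hρ N
    exact ⟨x, hx.1, hN, hρx⟩
  obtain ⟨s, hs1, hs⟩ := exists_infOften_of_frequently (P := (p · = 1)) fun N => by
    obtain ⟨x, hx, hN, hρx⟩ := hρ N
    exact ⟨x.2, hN, (hρx x.2 le_rfl).symm ▸ hx.2.2⟩
  exact (parityCond_iff_of_coBuchi hp).1 (hwin ρ hout).1 s hs hs1

end Trap

section Layers

variable (Q1 : Set Q) (E : Q → Q → Prop) (p : Q → ℕ) (w : Q → Q → ℤ)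

def cpre (A : Set Q) : Set Q :=
  {s | (s ∈ Q1 ∧ ∃ t, E s t ∧ t ∈ A) ∨ (s ∉ Q1 ∧ ∀ t, E s t → t ∈ A)}

def layer : ℕ → Set Q
  | 0 => ∅
  | k + 1 => layer k ∪ safeSet Q1 E p w (layer k)ᶜ ∪ cpre Q1 E (layer k)

theorem layer_mono : Monotone (layer Q1 E p w) :=
  monotone_nat_of_le_succ fun _ => Set.subset_union_left.trans Set.subset_union_left

noncomputable def layerRank (s : Q) : ℕ := sInf {k | s ∈ layer Q1 E p w (k + 1)}

open Classical in
noncomputable def layerStrategy (hE : ∀ x, ∃ t, E x t) (s : Q) : Q :=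
  if h : ∃ t, E s t ∧ t ∈ layer Q1 E p w (layerRank Q1 E p w s) then h.choose
  else if h' : ∃ t, E s t ∧ SafeStep Q1 E p w (layer Q1 E p w (layerRank Q1 E p w s))ᶜ s t
    then h'.choose
  else (hE s).choose

variable {Q1 E p w} {s t : Q} {k : ℕ}

theorem safeSet_subset_layer_succ (k : ℕ) :
    safeSet Q1 E p w (layer Q1 E p w k)ᶜ ⊆ layer Q1 E p w (k + 1) :=
  fun _ h => Or.inl (Or.inr h)

theorem mem_layer_layerRank_succ (h : s ∈ layer Q1 E p w k) :
    s ∈ layer Q1 E p w (layerRank Q1 E p w s + 1) := by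
  cases k with
  | zero => exact absurd h (Set.notMem_empty s)
  | succ k => exact Nat.sInf_mem (s := {k | s ∈ layer Q1 E p w (k + 1)}) ⟨k, h⟩

theorem layerRank_lt (h : s ∈ layer Q1 E p w k) : layerRank Q1 E p w s < k := by
  cases k with
  | zero => exact absurd h (Set.notMem_empty s)
  | succ k => exact Nat.lt_succ_of_le (Nat.sInf_le h)

theorem notMem_layer_layerRank : s ∉ layer Q1 E p w (layerRank Q1 E p w s) :=
  fun h => (layerRank_lt h).false

theorem exists_mem_layer_of_player1Wins [Finite Q] (hE : ∀ x, ∃ t, E x t)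
    (hp : ∀ s, p s = 1 ∨ p s = 2) {q : Q} (hwin : Player1Wins Q1 E p w q) :
    ∃ k, q ∈ layer Q1 E p w k := by
  obtain ⟨K, hK⟩ := WellFoundedGT.monotone_chain_condition ⟨_, layer_mono Q1 E p w⟩
  have hfix : layer Q1 E p w (K + 1) ⊆ layer Q1 E p w K := (hK (K + 1) K.le_succ).symm.le
  by_contra! hq
  refine not_player1Wins_of_trap hE hp (C := (layer Q1 E p w K)ᶜ) ?_ ?_ (hq K) hwin
  · exact fun s hs hs₁ t hst => by_contra fun ht =>
      hs (hfix (Or.inr (Or.inl ⟨hs₁, t, hst, not_not.mp ht⟩)))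
  · exact Set.eq_empty_of_forall_notMem fun s hs =>
      safeSet_subset hs (hfix (Or.inl (Or.inr hs)))

theorem layerStrategy_edge (hE : ∀ x, ∃ t, E x t) (s : Q) :
    E s (layerStrategy Q1 E p w hE s) := by
  unfold layerStrategy
  split_ifs with h h'
  exacts [h.choose_spec.1, h'.choose_spec.1, (hE s).choose_spec]

theorem layerStrategy_spec (hE : ∀ x, ∃ t, E x t) (s : Q)
    (h : (∃ t, E s t ∧ t ∈ layer Q1 E p w (layerRank Q1 E p w s)) ∨
      ∃ t, E s t ∧ SafeStep Q1 E p w (layer Q1 E p w (layerRank Q1 E p w s))ᶜ s t) :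
    layerStrategy Q1 E p w hE s ∈ layer Q1 E p w (layerRank Q1 E p w s) ∨
      SafeStep Q1 E p w (layer Q1 E p w (layerRank Q1 E p w s))ᶜ s
        (layerStrategy Q1 E p w hE s) := by
  unfold layerStrategy
  split_ifs with h₁ h₂
  exacts [Or.inl h₁.choose_spec.2, Or.inr h₂.choose_spec.2, (h.elim h₁ h₂).elim]

theorem layerStrategy_step (hE : ∀ x, ∃ t, E x t) (hs : s ∈ layer Q1 E p w k) (hst : E s t)
    (hσ : s ∈ Q1 → t = layerStrategy Q1 E p w hE s) :
    t ∈ layer Q1 E p w (layerRank Q1 E p w s) ∨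
      SafeStep Q1 E p w (layer Q1 E p w (layerRank Q1 E p w s))ᶜ s t := by
  rcases mem_layer_layerRank_succ hs with (hlow | hsafe) | hcpre
  · exact absurd hlow notMem_layer_layerRank
  · by_cases hs₁ : s ∈ Q1
    · exact hσ hs₁ ▸ layerStrategy_spec hE s (Or.inr (exists_safeStep_of_mem hsafe hs₁))
    · by_cases ht : t ∈ layer Q1 E p w (layerRank Q1 E p w s)
      · exact Or.inl ht
      · exact Or.inr (safeStep_of_notMem hsafe hs₁ hst ht)
  · rcases hcpre with ⟨hs₁, hdown⟩ | ⟨-, hall⟩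
    · exact hσ hs₁ ▸ layerStrategy_spec hE s (Or.inl hdown)
    · exact Or.inl (hall t hst)

theorem layerStrategy_outcome_step (hE : ∀ x, ∃ t, E x t) {q : Q} (hq : q ∈ layer Q1 E p w k)
    {ρ : ℕ → Q} (hρ : MemlessOutcome Q1 E (layerStrategy Q1 E p w hE) q ρ) (j : ℕ) :
    ρ (j + 1) ∈ layer Q1 E p w (layerRank Q1 E p w (ρ j)) ∨
      SafeStep Q1 E p w (layer Q1 E p w (layerRank Q1 E p w (ρ j)))ᶜ (ρ j) (ρ (j + 1)) := by
  obtain ⟨hρ0, hplay, hσ⟩ := hρ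
  suffices hlayer : ∃ l, ρ j ∈ layer Q1 E p w l from
    layerStrategy_step hE hlayer.choose_spec (hplay j) (hσ j)
  induction j with
  | zero => exact ⟨k, hρ0 ▸ hq⟩
  | succ j ih =>
    rcases layerStrategy_step hE ih.choose_spec (hplay j) (hσ j) with h | h
    exacts [⟨_, h⟩, ⟨_, safeSet_subset_layer_succ _ h.1⟩]

theorem layerStrategy_outcome_antitone (hE : ∀ x, ∃ t, E x t) {q : Q}
    (hq : q ∈ layer Q1 E p w k) {ρ : ℕ → Q}
    (hρ : MemlessOutcome Q1 E (layerStrategy Q1 E p w hE) q ρ) :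
    Antitone fun j => layerRank Q1 E p w (ρ j) :=
  antitone_nat_of_succ_le fun j => by
    rcases layerStrategy_outcome_step hE hq hρ j with h | h
    exacts [(layerRank_lt h).le,
      Nat.lt_succ_iff.mp (layerRank_lt (safeSet_subset_layer_succ _ h.1))]

theorem layerStrategy_cycle (hE : ∀ x, ∃ t, E x t) {q : Q} (hq : q ∈ layer Q1 E p w k)
    {ρ : ℕ → Q} (hρ : MemlessOutcome Q1 E (layerStrategy Q1 E p w hE) q ρ) {i n : ℕ}
    (hn : 0 < n) (hcyc : ρ i = ρ (i + n)) :
    0 ≤ EL w (fun j => ρ (i + j)) n ∧ p (ρ i) ≠ 1 := by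
  set r := fun j => layerRank Q1 E p w (ρ j)
  have hanti : Antitone r := layerStrategy_outcome_antitone hE hq hρ
  have hconst : ∀ a ≤ n, r (i + a) = r i := fun a ha =>
    le_antisymm (hanti (by omega))
      (by simpa only [r, ← hcyc] using hanti (by omega : i + a ≤ i + n))
  have hsafe : ∀ a < n,
      SafeStep Q1 E p w (layer Q1 E p w (r i))ᶜ (ρ (i + a)) (ρ (i + a + 1)) := by
    intro a ha
    rcases layerStrategy_outcome_step hE hq hρ (i + a) with h | h
    · have := layerRank_lt h
      have := hconst a ha.le
      have := hconst (a + 1) ha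
      simp only [r, ← add_assoc] at *
      omega
    · rwa [← hconst a ha.le]
  refine ⟨?_, ?_⟩
  · let v : ℕ → ℤ := fun a => safeCredit Q1 E p w (layer Q1 E p w (r i))ᶜ (ρ (i + a))
    have hv : v n = v 0 := by simp only [v, ← hcyc, add_zero]
    have hle : ∑ a ∈ range n, (v (a + 1) - v a) ≤ EL w (fun j => ρ (i + j)) n :=
      sum_le_sum fun a ha => by
        have := (hsafe a (mem_range.mp ha)).2.2
        simp only [v, ← add_assoc]
        linarith
    rw [sum_range_sub, hv, sub_self] at hle
    exact hle
  · have := (hsafe (n - 1) (by omega)).2.1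
    rwa [show i + (n - 1) + 1 = i + n by omega, ← hcyc] at this

end Layers

section CycleRemoval

variable {Q1 : Set Q} {E : Q → Q → Prop} {w : Q → Q → ℤ} {σ : Q → Q} {q : Q}
  {ρ : ℕ → Q} {i k : ℕ}

def cutCycle (ρ : ℕ → Q) (i k : ℕ) : ℕ → Q := fun j => if j < i then ρ j else ρ (j + k)

theorem exists_cutCycle_succ (hcyc : ρ i = ρ (i + k)) (j : ℕ) :
    ∃ j', cutCycle ρ i k j = ρ j' ∧ cutCycle ρ i k (j + 1) = ρ (j' + 1) := by
  simp only [cutCycle]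
  rcases lt_trichotomy (j + 1) i with h | h | h
  · exact ⟨j, by simp [show j < i by omega, h]⟩
  · subst h
    exact ⟨j, by simp [hcyc]⟩
  · exact ⟨j + k, by simp [show ¬ j < i by omega, show ¬ j + 1 < i by omega, add_right_comm]⟩

theorem MemlessOutcome.cutCycle (hρ : MemlessOutcome Q1 E σ q ρ) (hcyc : ρ i = ρ (i + k)) :
    MemlessOutcome Q1 E σ q (cutCycle ρ i k) := by
  obtain ⟨hρ0, hplay, hσ⟩ := hρ
  refine ⟨?_, fun j => ?_, fun j => ?_⟩
  · rcases Nat.eq_zero_or_pos i with rfl | hi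
    · rw [zero_add] at hcyc
      simpa [_root_.cutCycle, ← hcyc] using hρ0
    · simpa [_root_.cutCycle, hi] using hρ0
  all_goals obtain ⟨j', hj, hj'⟩ := exists_cutCycle_succ hcyc j
  all_goals rw [hj, hj']
  exacts [hplay j', hσ j']

theorem EL_cutCycle (w : Q → Q → ℤ) (hcyc : ρ i = ρ (i + k)) (m : ℕ) :
    EL w ρ (i + k + m) = EL w (cutCycle ρ i k) (i + m) + EL w (fun j => ρ (i + j)) k := by
  have hlow : ∀ j ≤ i, cutCycle ρ i k j = ρ j := fun j hj => by
    rcases hj.lt_or_eq with hj | rfl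
    · simp [cutCycle, hj]
    · simp [cutCycle, hcyc]
  have hhigh : (fun j => cutCycle ρ i k (i + j)) = fun j => ρ (i + k + j) := by
    funext j
    simp [cutCycle, add_right_comm]
  rw [EL_add, EL_add, EL_add w (cutCycle ρ i k), EL_congr w hlow, hhigh]
  ring

theorem exists_cycle_of_card_le [Fintype Q] (ρ : ℕ → Q) {m : ℕ} (hm : Fintype.card Q ≤ m) :
    ∃ i k, 0 < k ∧ i + k ≤ m ∧ ρ i = ρ (i + k) := by
  obtain ⟨a, b, hab, heq⟩ := Fintype.exists_ne_map_eq_of_card_lt (fun j : Fin (m + 1) => ρ j)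
    (by simpa using Nat.lt_succ_of_le hm)
  rcases lt_or_gt_of_ne (Fin.val_ne_of_ne hab) with h | h
  · exact ⟨a, b - a, by omega, by omega, by rwa [Nat.add_sub_cancel' h.le]⟩
  · exact ⟨b, a - b, by omega, by omega, by rw [Nat.add_sub_cancel' h.le]; exact heq.symm⟩

theorem energyCond_of_forall_cycle_nonneg [Fintype Q] {W : ℕ}
    (hW : ∀ s t, E s t → |w s t| ≤ W)
    (hcyc : ∀ ρ, MemlessOutcome Q1 E σ q ρ → ∀ i k, 0 < k → ρ i = ρ (i + k) →
      0 ≤ EL w (fun j => ρ (i + j)) k)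
    (hρ : MemlessOutcome Q1 E σ q ρ) : EnergyCond w ((Fintype.card Q - 1) * W) ρ := by
  intro m
  induction m using Nat.strong_induction_on generalizing ρ with
  | _ m ih =>
    rcases lt_or_ge m (Fintype.card Q) with hm | hm
    · have := neg_mul_le_EL hW hρ.2.1 m
      have : m * W ≤ (Fintype.card Q - 1) * W := Nat.mul_le_mul_right _ (by omega)
      omega
    · obtain ⟨i, k, hk, hikm, hik⟩ := exists_cycle_of_card_le ρ hm
      obtain ⟨d, rfl⟩ := Nat.exists_eq_add_of_le hikm
      have := ih (i + d) (by omega) (hρ.cutCycle hik)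
      rw [EL_cutCycle w hik]
      linarith [hcyc ρ hρ i k hk hik]

end CycleRemoval

theorem stmt7_general {Q : Type*} [Fintype Q] (Q1 : Set Q) (E : Q → Q → Prop)
    (hE : ∀ q, ∃ q', E q q') (p : Q → ℕ) (w : Q → Q → ℤ)
    (hp : ∀ q, p q = 1 ∨ p q = 2)
    (n W : ℕ) (hn : Fintype.card Q = n)
    (hWmax : ∀ q q', E q q' → |w q q'| ≤ (W : ℤ))
    (q : Q) (hwin : Player1Wins Q1 E p w q) :
    ∃ σ : Q → Q, (∀ s ∈ Q1, E s (σ s)) ∧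
      ∀ ρ, MemlessOutcome Q1 E σ q ρ →
        ParityCond p ρ ∧ EnergyCond w ((n - 1) * W) ρ := by
  obtain ⟨k, hq⟩ := exists_mem_layer_of_player1Wins hE hp hwin
  have hcyc := fun ρ (hρ : MemlessOutcome Q1 E (layerStrategy Q1 E p w hE) q ρ) i m =>
    layerStrategy_cycle hE hq hρ (i := i) (n := m)
  refine ⟨layerStrategy Q1 E p w hE, fun s _ => layerStrategy_edge hE s, fun ρ hρ => ⟨?_, ?_⟩⟩
  · refine (parityCond_iff_of_coBuchi hp).2 fun s hs => ?_
    obtain ⟨i, m, hm, rfl, hcycle⟩ := hs.exists_cycle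
    exact (hcyc ρ hρ i m hm hcycle.symm).2
  · subst hn
    exact energyCond_of_forall_cycle_nonneg hWmax
      (fun ρ hρ i m hm hcycle => (hcyc ρ hρ i m hm hcycle).1) hρ

/-- memoryless strategies suffice for player 1 in energy coBüchi games
(priorities in `{1,2}`): if player 1 wins from `q` with some finite initial credit,
then player 1 has a memoryless strategy winning from `q` with initial credit
`(n−1)·W`. -/
theorem stmt7 {Q : Type*} [Fintype Q] (Q1 : Set Q) (E : Q → Q → Prop)
    (hE : ∀ q, ∃ q', E q q') (p : Q → ℕ) (w : Q → Q → ℤ)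
    (hp : ∀ q, p q = 1 ∨ p q = 2)
    (n W : ℕ) (hn : Fintype.card Q = n) (hW : 1 ≤ W)
    (hWmax : ∀ q q', E q q' → |w q q'| ≤ (W : ℤ))
    (q : Q) (hwin : Player1Wins Q1 E p w q) :
    ∃ σ : Q → Q, (∀ s ∈ Q1, E s (σ s)) ∧
      ∀ ρ, MemlessOutcome Q1 E σ q ρ →
        ParityCond p ρ ∧ EnergyCond w ((n - 1) * W) ρ :=
  stmt7_general Q1 E hE p w hp n W hn hWmax q hwin
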